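/- Pinning kills the configurations {3,5,6} and {4,5,6}: let (N,d) = (3,6) and let c be a self-consistent 3-fermion coefficient vector with non-increasingly ordered natural occupation numbers n_1 ≥ n_2 ≥ … ≥ n_6. If the Borland–Dennis constraint is pinned, i.e. D(n) := 2 − (n_1 + n_2 + n_4) = 0, then c({3,5,6}) = 0 and c({4,5,6}) = 0. -/

import Mathlib

open Finset

noncomputable section

/-- The set of all `N`-element subsets of `{1,…,d}` (modelled as `Fin d`). -/
def configs (d N : ℕ) : Finset (Finset (Fin d)) :=
  Finset.univ.filter fun S => S.card = N

/-- The sign `ε(k,R) = (−1)^{#{r ∈ R : r < k}}`. -/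
def eps {d : ℕ} (k : Fin d) (R : Finset (Fin d)) : ℂ :=
  (-1 : ℂ) ^ (R.filter fun r => r < k).card

/-- The one-particle reduced density matrix of an `N`-fermion coefficient vector `c`. -/
def rho {d : ℕ} (N : ℕ) (c : Finset (Fin d) → ℂ) : Matrix (Fin d) (Fin d) ℂ :=
  Matrix.of fun i j =>
    ∑ S ∈ (configs d N).filter (fun S => i ∈ S ∧ j ∉ S.erase i),
      eps i S * eps j (insert j (S.erase i)) *
        (starRingEnd ℂ) (c (insert j (S.erase i))) * c S

/-- Normalization `∑_S |c(S)|² = 1` over all `N`-element subsets `S`. -/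
def normalized {d : ℕ} (N : ℕ) (c : Finset (Fin d) → ℂ) : Prop :=
  ∑ S ∈ configs d N, ‖c S‖ ^ 2 = 1

/-- Self-consistency: the one-particle reduced density matrix is diagonal. -/
def selfConsistent {d : ℕ} (N : ℕ) (c : Finset (Fin d) → ℂ) : Prop :=
  ∀ i j : Fin d, i ≠ j → rho N c i j = 0

/-- The natural occupation numbers `n_j = ρ(c)_{jj}` (real parts of the diagonal). -/
def occ {d : ℕ} (N : ℕ) (c : Finset (Fin d) → ℂ) (j : Fin d) : ℝ :=
  (rho N c j j).re

/-- The occupation vector `n_S ∈ {0,1}^d` of a configuration `S`. -/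
def occVec {d : ℕ} (S : Finset (Fin d)) (j : Fin d) : ℝ :=
  if j ∈ S then 1 else 0

/-- `lam` is the list of eigenvalues of `ρ(c)` in non-increasing order. -/
def isOrderedSpectrum {d : ℕ} (N : ℕ) (c : Finset (Fin d) → ℂ) (lam : Fin d → ℝ) : Prop :=
  (∀ i j : Fin d, i ≤ j → lam j ≤ lam i) ∧
  ∃ (h : (rho N c).IsHermitian) (σ : Equiv.Perm (Fin d)), ∀ i, lam i = h.eigenvalues (σ i)

/-- `x ↦ κ₀ + ∑_j κ_j x_j` is a valid generalized Pauli constraint for the setting `(N,d)`. -/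
def IsGPC {d : ℕ} (N : ℕ) (κ₀ : ℝ) (κ : Fin d → ℝ) : Prop :=
  ∀ c : Finset (Fin d) → ℂ, normalized N c →
    ∀ lam : Fin d → ℝ, isOrderedSpectrum N c lam →
      0 ≤ κ₀ + ∑ j, κ j * lam j

lemma abs_eps (k : Fin 6) (R : Finset (Fin 6)) : ‖eps k R‖ = 1 := by
  unfold eps
  rw [norm_pow]
  simp

lemma eps_sq (k : Fin 6) (R : Finset (Fin 6)) : eps k R * eps k R = 1 := by
  unfold eps
  rw [← pow_add, ← two_mul, pow_mul]
  norm_num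

lemma diagterm (k : Fin 6) (R : Finset (Fin 6)) (z : ℂ) :
    eps k R * eps k R * (starRingEnd ℂ) z * z = ((‖z‖ ^ 2 : ℝ) : ℂ) := by
  rw [eps_sq, one_mul, mul_comm, Complex.mul_conj, ← Complex.sq_norm]

set_option maxHeartbeats 2000000 in
/-- Orbitals written 0-based: `{3,5,6}` and `{4,5,6}` become `{2,4,5}` and `{3,4,5}`. -/
theorem stmt8 (c : Finset (Fin 6) → ℂ) (hnorm : normalized 3 c) (hsc : selfConsistent 3 c)
    (hord : ∀ i j : Fin 6, i ≤ j → occ 3 c j ≤ occ 3 c i)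
    (hpin : 2 - (occ 3 c 0 + occ 3 c 1 + occ 3 c 3) = 0) :
    c {2,4,5} = 0 ∧ c {3,4,5} = 0 := by
  have hcfg : configs 6 3 = ({({0,1,2} : Finset (Fin 6)), {0,1,3}, {0,1,4}, {0,1,5}, {0,2,3}, {0,2,4}, {0,2,5}, {0,3,4}, {0,3,5}, {0,4,5}, {1,2,3}, {1,2,4}, {1,2,5}, {1,3,4}, {1,3,5}, {1,4,5}, {2,3,4}, {2,3,5}, {2,4,5}, {3,4,5}} : Finset (Finset (Fin 6))) := by decide
  unfold normalized at hnorm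
  rw [hcfg] at hnorm
  simp (config := { decide := true }) only [Finset.sum_insert, Finset.mem_insert, Finset.mem_singleton, Finset.sum_singleton] at hnorm
  have hocc0 : occ 3 c 0 = ‖c {0,1,2}‖ ^ 2 + ‖c {0,1,3}‖ ^ 2 + ‖c {0,1,4}‖ ^ 2 + ‖c {0,1,5}‖ ^ 2 + ‖c {0,2,3}‖ ^ 2 + ‖c {0,2,4}‖ ^ 2 + ‖c {0,2,5}‖ ^ 2 + ‖c {0,3,4}‖ ^ 2 + ‖c {0,3,5}‖ ^ 2 + ‖c {0,4,5}‖ ^ 2 := by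
    unfold occ rho
    simp only [Matrix.of_apply]
    rw [show (configs 6 3).filter (fun S => (0:Fin 6) ∈ S ∧ (0:Fin 6) ∉ S.erase 0) = ({({0,1,2} : Finset (Fin 6)), {0,1,3}, {0,1,4}, {0,1,5}, {0,2,3}, {0,2,4}, {0,2,5}, {0,3,4}, {0,3,5}, {0,4,5}} : Finset (Finset (Fin 6))) from by decide]
    simp (config := { decide := true }) only [Finset.sum_insert, Finset.mem_insert, Finset.mem_singleton, Finset.sum_singleton]
    rw [show insert (0:Fin 6) (Finset.erase ({0,1,2} : Finset (Fin 6)) 0) = ({0,1,2} : Finset (Fin 6)) from by decide, show insert (0:Fin 6) (Finset.erase ({0,1,3} : Finset (Fin 6)) 0) = ({0,1,3} : Finset (Fin 6)) from by decide, show insert (0:Fin 6) (Finset.erase ({0,1,4} : Finset (Fin 6)) 0) = ({0,1,4} : Finset (Fin 6)) from by decide, show insert (0:Fin 6) (Finset.erase ({0,1,5} : Finset (Fin 6)) 0) = ({0,1,5} : Finset (Fin 6)) from by decide, show insert (0:Fin 6) (Finset.erase ({0,2,3} : Finset (Fin 6)) 0) = ({0,2,3} : Finset (Fin 6)) from by decide,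 show insert (0:Fin 6) (Finset.erase ({0,2,4} : Finset (Fin 6)) 0) = ({0,2,4} : Finset (Fin 6)) from by decide, show insert (0:Fin 6) (Finset.erase ({0,2,5} : Finset (Fin 6)) 0) = ({0,2,5} : Finset (Fin 6)) from by decide, show insert (0:Fin 6) (Finset.erase ({0,3,4} : Finset (Fin 6)) 0) = ({0,3,4} : Finset (Fin 6)) from by decide, show insert (0:Fin 6) (Finset.erase ({0,3,5} : Finset (Fin 6)) 0) = ({0,3,5} : Finset (Fin 6)) from by decide, show insert (0:Fin 6) (Finset.erase ({0,4,5} : Finset (Fin 6)) 0) = ({0,4,5} : Finset (Fin 6)) from by decide]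
    simp only [diagterm]
    simp only [Complex.add_re, Complex.ofReal_re]
    ring
  have hocc1 : occ 3 c 1 = ‖c {0,1,2}‖ ^ 2 + ‖c {0,1,3}‖ ^ 2 + ‖c {0,1,4}‖ ^ 2 + ‖c {0,1,5}‖ ^ 2 + ‖c {1,2,3}‖ ^ 2 + ‖c {1,2,4}‖ ^ 2 + ‖c {1,2,5}‖ ^ 2 + ‖c {1,3,4}‖ ^ 2 + ‖c {1,3,5}‖ ^ 2 + ‖c {1,4,5}‖ ^ 2 := by
    unfold occ rho
    simp only [Matrix.of_apply]
    rw [show (configs 6 3).filter (fun S => (1:Fin 6) ∈ S ∧ (1:Fin 6) ∉ S.erase 1) = ({({0,1,2} : Finset (Fin 6)), {0,1,3}, {0,1,4}, {0,1,5}, {1,2,3}, {1,2,4}, {1,2,5}, {1,3,4}, {1,3,5}, {1,4,5}} : Finset (Finset (Fin 6))) from by decide]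
    simp (config := { decide := true }) only [Finset.sum_insert, Finset.mem_insert, Finset.mem_singleton, Finset.sum_singleton]
    rw [show insert (1:Fin 6) (Finset.erase ({0,1,2} : Finset (Fin 6)) 1) = ({0,1,2} : Finset (Fin 6)) from by decide, show insert (1:Fin 6) (Finset.erase ({0,1,3} : Finset (Fin 6)) 1) = ({0,1,3} : Finset (Fin 6)) from by decide, show insert (1:Fin 6) (Finset.erase ({0,1,4} : Finset (Fin 6)) 1) = ({0,1,4} : Finset (Fin 6)) from by decide, show insert (1:Fin 6) (Finset.erase ({0,1,5} : Finset (Fin 6)) 1) = ({0,1,5} : Finset (Fin 6)) from by decide, show insert (1:Fin 6) (Finset.erase ({1,2,3} : Finset (Fin 6)) 1) = ({1,2,3} : Finset (Fin 6)) from by decide, show insert (1:Fin 6) (Finset.erase ({1,2,4} : Finset (Fin 6)) 1) = ({1,2,4} : Finset (Fin 6)) from by decide, show insert (1:Fin 6) (Finset.erase ({1,2,5} : Finset (Fin 6)) 1) = ({1,2,5} : Finset (Fin 6)) from by decide, show insert (1:Fin 6) (Finset.erase ({1,3,4} : Finset (Fin 6)) 1) = ({1,3,4} : Finset (Fin 6))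 from by decide, show insert (1:Fin 6) (Finset.erase ({1,3,5} : Finset (Fin 6)) 1) = ({1,3,5} : Finset (Fin 6)) from by decide, show insert (1:Fin 6) (Finset.erase ({1,4,5} : Finset (Fin 6)) 1) = ({1,4,5} : Finset (Fin 6)) from by decide]
    simp only [diagterm]
    simp only [Complex.add_re, Complex.ofReal_re]
    ring
  have hocc2 : occ 3 c 2 = ‖c {0,1,2}‖ ^ 2 + ‖c {0,2,3}‖ ^ 2 + ‖c {0,2,4}‖ ^ 2 + ‖c {0,2,5}‖ ^ 2 + ‖c {1,2,3}‖ ^ 2 + ‖c {1,2,4}‖ ^ 2 + ‖c {1,2,5}‖ ^ 2 + ‖c {2,3,4}‖ ^ 2 + ‖c {2,3,5}‖ ^ 2 + ‖c {2,4,5}‖ ^ 2 := by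
    unfold occ rho
    simp only [Matrix.of_apply]
    rw [show (configs 6 3).filter (fun S => (2:Fin 6) ∈ S ∧ (2:Fin 6) ∉ S.erase 2) = ({({0,1,2} : Finset (Fin 6)), {0,2,3}, {0,2,4}, {0,2,5}, {1,2,3}, {1,2,4}, {1,2,5}, {2,3,4}, {2,3,5}, {2,4,5}} : Finset (Finset (Fin 6))) from by decide]
    simp (config := { decide := true }) only [Finset.sum_insert, Finset.mem_insert, Finset.mem_singleton, Finset.sum_singleton]
    rw [show insert (2:Fin 6) (Finset.erase ({0,1,2} : Finset (Fin 6)) 2) = ({0,1,2} : Finset (Fin 6)) from by decide, show insert (2:Fin 6) (Finset.erase ({0,2,3} : Finset (Fin 6)) 2) = ({0,2,3} : Finset (Fin 6)) from by decide, show insert (2:Fin 6) (Finset.erase ({0,2,4} : Finset (Fin 6)) 2) = ({0,2,4} : Finset (Fin 6)) from by decide, show insert (2:Fin 6) (Finset.erase ({0,2,5} : Finset (Fin 6)) 2) = ({0,2,5} : Finset (Fin 6)) from by decide, show insert (2:Fin 6) (Finset.erase ({1,2,3} : Finset (Fin 6)) 2) = ({1,2,3} : Finset (Fin 6)) from by decide,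 show insert (2:Fin 6) (Finset.erase ({1,2,4} : Finset (Fin 6)) 2) = ({1,2,4} : Finset (Fin 6)) from by decide, show insert (2:Fin 6) (Finset.erase ({1,2,5} : Finset (Fin 6)) 2) = ({1,2,5} : Finset (Fin 6)) from by decide, show insert (2:Fin 6) (Finset.erase ({2,3,4} : Finset (Fin 6)) 2) = ({2,3,4} : Finset (Fin 6)) from by decide, show insert (2:Fin 6) (Finset.erase ({2,3,5} : Finset (Fin 6)) 2) = ({2,3,5} : Finset (Fin 6)) from by decide, show insert (2:Fin 6) (Finset.erase ({2,4,5} : Finset (Fin 6)) 2) = ({2,4,5} : Finset (Fin 6)) from by decide]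
    simp only [diagterm]
    simp only [Complex.add_re, Complex.ofReal_re]
    ring
  have hocc3 : occ 3 c 3 = ‖c {0,1,3}‖ ^ 2 + ‖c {0,2,3}‖ ^ 2 + ‖c {0,3,4}‖ ^ 2 + ‖c {0,3,5}‖ ^ 2 + ‖c {1,2,3}‖ ^ 2 + ‖c {1,3,4}‖ ^ 2 + ‖c {1,3,5}‖ ^ 2 + ‖c {2,3,4}‖ ^ 2 + ‖c {2,3,5}‖ ^ 2 + ‖c {3,4,5}‖ ^ 2 := by
    unfold occ rho
    simp only [Matrix.of_apply]
    rw [show (configs 6 3).filter (fun S => (3:Fin 6) ∈ S ∧ (3:Fin 6) ∉ S.erase 3) = ({({0,1,3} : Finset (Fin 6)), {0,2,3}, {0,3,4}, {0,3,5}, {1,2,3}, {1,3,4}, {1,3,5}, {2,3,4}, {2,3,5}, {3,4,5}} : Finset (Finset (Fin 6))) from by decide]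
    simp (config := { decide := true }) only [Finset.sum_insert, Finset.mem_insert, Finset.mem_singleton, Finset.sum_singleton]
    rw [show insert (3:Fin 6) (Finset.erase ({0,1,3} : Finset (Fin 6)) 3) = ({0,1,3} : Finset (Fin 6)) from by decide, show insert (3:Fin 6) (Finset.erase ({0,2,3} : Finset (Fin 6)) 3) = ({0,2,3} : Finset (Fin 6)) from by decide, show insert (3:Fin 6) (Finset.erase ({0,3,4} : Finset (Fin 6)) 3) = ({0,3,4} : Finset (Fin 6)) from by decide, show insert (3:Fin 6) (Finset.erase ({0,3,5} : Finset (Fin 6)) 3) = ({0,3,5} : Finset (Fin 6)) from by decide, show insert (3:Fin 6) (Finset.erase ({1,2,3} : Finset (Fin 6)) 3) = ({1,2,3} : Finset (Fin 6)) from by decide, show insert (3:Fin 6) (Finset.erase ({1,3,4} : Finset (Fin 6)) 3) = ({1,3,4} : Finset (Fin 6)) from by decide, show insert (3:Fin 6) (Finset.erase ({1,3,5} : Finset (Fin 6)) 3) = ({1,3,5} : Finset (Fin 6)) from by decide, show insert (3:Fin 6) (Finset.erase ({2,3,4} : Finset (Fin 6)) 3) = ({2,3,4} : Finset (Fin 6))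 from by decide, show insert (3:Fin 6) (Finset.erase ({2,3,5} : Finset (Fin 6)) 3) = ({2,3,5} : Finset (Fin 6)) from by decide, show insert (3:Fin 6) (Finset.erase ({3,4,5} : Finset (Fin 6)) 3) = ({3,4,5} : Finset (Fin 6)) from by decide]
    simp only [diagterm]
    simp only [Complex.add_re, Complex.ofReal_re]
    ring
  rw [hocc0, hocc1, hocc3] at hpin
  have hord23 : occ 3 c 3 ≤ occ 3 c 2 := hord 2 3 (by decide)
  rw [hocc2, hocc3] at hord23
  have hE : rho 3 c 3 2 = 0 := hsc 3 2 (by decide)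
  unfold rho at hE
  simp only [Matrix.of_apply] at hE
  rw [show (configs 6 3).filter (fun S => (3:Fin 6) ∈ S ∧ (2:Fin 6) ∉ S.erase 3) = ({({0,1,3} : Finset (Fin 6)), {0,3,4}, {0,3,5}, {1,3,4}, {1,3,5}, {3,4,5}} : Finset (Finset (Fin 6))) from by decide] at hE
  simp (config := { decide := true }) only [Finset.sum_insert, Finset.mem_insert, Finset.mem_singleton, Finset.sum_singleton] at hE
  rw [show insert (2:Fin 6) (Finset.erase ({0,1,3} : Finset (Fin 6)) 3) = ({0,1,2} : Finset (Fin 6)) from by decide, show insert (2:Fin 6) (Finset.erase ({0,3,4} : Finset (Fin 6)) 3) = ({0,2,4} : Finset (Fin 6)) from by decide, show insert (2:Fin 6) (Finset.erase ({0,3,5} : Finset (Fin 6)) 3) = ({0,2,5} : Finset (Fin 6)) from by decide, show insert (2:Fin 6) (Finset.erase ({1,3,4} : Finset (Fin 6)) 3) = ({1,2,4} : Finset (Fin 6)) from by decide, show insert (2:Fin 6) (Finset.erase ({1,3,5} : Finset (Fin 6)) 3) = ({1,2,5} : Finset (Fin 6)) from by decide, show insert (2:Fin 6) (Finset.erase ({3,4,5}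 : Finset (Fin 6)) 3) = ({2,4,5} : Finset (Fin 6)) from by decide] at hE
  have h1 : eps (3:Fin 6) ({0,1,3} : Finset (Fin 6)) * eps (2:Fin 6) ({0,1,2} : Finset (Fin 6)) * (starRingEnd ℂ) (c {0,1,2}) * c {0,1,3} = -((eps (3:Fin 6) ({0,3,4} : Finset (Fin 6)) * eps (2:Fin 6) ({0,2,4} : Finset (Fin 6)) * (starRingEnd ℂ) (c {0,2,4}) * c {0,3,4}) + (eps (3:Fin 6) ({0,3,5} : Finset (Fin 6)) * eps (2:Fin 6) ({0,2,5} : Finset (Fin 6)) * (starRingEnd ℂ) (c {0,2,5}) * c {0,3,5}) + (eps (3:Fin 6) ({1,3,4} : Finset (Fin 6)) * eps (2:Fin 6) ({1,2,4} : Finset (Fin 6)) * (starRingEnd ℂ) (c {1,2,4}) * c {1,3,4}) + (eps (3:Fin 6) ({1,3,5} : Finset (Fin 6)) * eps (2:Fin 6) ({1,2,5} : Finset (Fin 6)) * (starRingEnd ℂ) (c {1,2,5}) * c {1,3,5}) + (eps (3:Fin 6) ({3,4,5} : Finset (Fin 6)) * eps (2:Fin 6) ({2,4,5} : Finset (Fin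 6)) * (starRingEnd ℂ) (c {2,4,5}) * c {3,4,5})) := by linear_combination hE
  have e1 : ‖eps (3:Fin 6) ({0,1,3} : Finset (Fin 6)) * eps (2:Fin 6) ({0,1,2} : Finset (Fin 6)) * (starRingEnd ℂ) (c {0,1,2}) * c {0,1,3}‖ = ‖c {0,1,2}‖ * ‖c {0,1,3}‖ := by
    rw [norm_mul, norm_mul, norm_mul, abs_eps, abs_eps, Complex.norm_conj]
    ring
  have e2 : ‖eps (3:Fin 6) ({0,3,4} : Finset (Fin 6)) * eps (2:Fin 6) ({0,2,4} : Finset (Fin 6)) * (starRingEnd ℂ) (c {0,2,4}) * c {0,3,4}‖ = ‖c {0,2,4}‖ * ‖c {0,3,4}‖ := by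
    rw [norm_mul, norm_mul, norm_mul, abs_eps, abs_eps, Complex.norm_conj]
    ring
  have e3 : ‖eps (3:Fin 6) ({0,3,5} : Finset (Fin 6)) * eps (2:Fin 6) ({0,2,5} : Finset (Fin 6)) * (starRingEnd ℂ) (c {0,2,5}) * c {0,3,5}‖ = ‖c {0,2,5}‖ * ‖c {0,3,5}‖ := by
    rw [norm_mul, norm_mul, norm_mul, abs_eps, abs_eps, Complex.norm_conj]
    ring
  have e4 : ‖eps (3:Fin 6) ({1,3,4} : Finset (Fin 6)) * eps (2:Fin 6) ({1,2,4} : Finset (Fin 6)) * (starRingEnd ℂ) (c {1,2,4}) * c {1,3,4}‖ = ‖c {1,2,4}‖ * ‖c {1,3,4}‖ := by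
    rw [norm_mul, norm_mul, norm_mul, abs_eps, abs_eps, Complex.norm_conj]
    ring
  have e5 : ‖eps (3:Fin 6) ({1,3,5} : Finset (Fin 6)) * eps (2:Fin 6) ({1,2,5} : Finset (Fin 6)) * (starRingEnd ℂ) (c {1,2,5}) * c {1,3,5}‖ = ‖c {1,2,5}‖ * ‖c {1,3,5}‖ := by
    rw [norm_mul, norm_mul, norm_mul, abs_eps, abs_eps, Complex.norm_conj]
    ring
  have e6 : ‖eps (3:Fin 6) ({3,4,5} : Finset (Fin 6)) * eps (2:Fin 6) ({2,4,5} : Finset (Fin 6)) * (starRingEnd ℂ) (c {2,4,5}) * c {3,4,5}‖ = ‖c {2,4,5}‖ * ‖c {3,4,5}‖ := by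
    rw [norm_mul, norm_mul, norm_mul, abs_eps, abs_eps, Complex.norm_conj]
    ring
  have htri : ‖c {0,1,2}‖ * ‖c {0,1,3}‖ ≤ ‖c {0,2,4}‖ * ‖c {0,3,4}‖ + ‖c {0,2,5}‖ * ‖c {0,3,5}‖ + ‖c {1,2,4}‖ * ‖c {1,3,4}‖ + ‖c {1,2,5}‖ * ‖c {1,3,5}‖ + ‖c {2,4,5}‖ * ‖c {3,4,5}‖ := by
    calc ‖c {0,1,2}‖ * ‖c {0,1,3}‖ = ‖eps (3:Fin 6) ({0,1,3} : Finset (Fin 6)) * eps (2:Fin 6) ({0,1,2} : Finset (Fin 6)) * (starRingEnd ℂ) (c {0,1,2}) * c {0,1,3}‖ := e1.symm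
      _ = ‖-((eps (3:Fin 6) ({0,3,4} : Finset (Fin 6)) * eps (2:Fin 6) ({0,2,4} : Finset (Fin 6)) * (starRingEnd ℂ) (c {0,2,4}) * c {0,3,4}) + (eps (3:Fin 6) ({0,3,5} : Finset (Fin 6)) * eps (2:Fin 6) ({0,2,5} : Finset (Fin 6)) * (starRingEnd ℂ) (c {0,2,5}) * c {0,3,5}) + (eps (3:Fin 6) ({1,3,4} : Finset (Fin 6)) * eps (2:Fin 6) ({1,2,4} : Finset (Fin 6)) * (starRingEnd ℂ) (c {1,2,4}) * c {1,3,4}) + (eps (3:Fin 6) ({1,3,5} : Finset (Fin 6)) * eps (2:Fin 6) ({1,2,5} : Finset (Fin 6)) * (starRingEnd ℂ) (c {1,2,5}) * c {1,3,5}) + (eps (3:Fin 6) ({3,4,5} : Finset (Fin 6)) * eps (2:Fin 6) ({2,4,5} : Finset (Fin 6)) * (starRingEnd ℂ) (c {2,4,5}) * c {3,4,5}))‖ := by rw [h1]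
      _ = ‖(eps (3:Fin 6) ({0,3,4} : Finset (Fin 6)) * eps (2:Fin 6) ({0,2,4} : Finset (Fin 6)) * (starRingEnd ℂ) (c {0,2,4}) * c {0,3,4}) + (eps (3:Fin 6) ({0,3,5} : Finset (Fin 6)) * eps (2:Fin 6) ({0,2,5} : Finset (Fin 6)) * (starRingEnd ℂ) (c {0,2,5}) * c {0,3,5}) + (eps (3:Fin 6) ({1,3,4} : Finset (Fin 6)) * eps (2:Fin 6) ({1,2,4} : Finset (Fin 6)) * (starRingEnd ℂ) (c {1,2,4}) * c {1,3,4}) + (eps (3:Fin 6) ({1,3,5} : Finset (Fin 6)) * eps (2:Fin 6) ({1,2,5} : Finset (Fin 6)) * (starRingEnd ℂ) (c {1,2,5}) * c {1,3,5}) + (eps (3:Fin 6) ({3,4,5} : Finset (Fin 6)) * eps (2:Fin 6) ({2,4,5} : Finset (Fin 6)) * (starRingEnd ℂ) (c {2,4,5}) * c {3,4,5})‖ := norm_neg _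
      _ ≤ ‖(eps (3:Fin 6) ({0,3,4} : Finset (Fin 6)) * eps (2:Fin 6) ({0,2,4} : Finset (Fin 6)) * (starRingEnd ℂ) (c {0,2,4}) * c {0,3,4}) + (eps (3:Fin 6) ({0,3,5} : Finset (Fin 6)) * eps (2:Fin 6) ({0,2,5} : Finset (Fin 6)) * (starRingEnd ℂ) (c {0,2,5}) * c {0,3,5}) + (eps (3:Fin 6) ({1,3,4} : Finset (Fin 6)) * eps (2:Fin 6) ({1,2,4} : Finset (Fin 6)) * (starRingEnd ℂ) (c {1,2,4}) * c {1,3,4}) + (eps (3:Fin 6) ({1,3,5} : Finset (Fin 6)) * eps (2:Fin 6) ({1,2,5} : Finset (Fin 6)) * (starRingEnd ℂ) (c {1,2,5}) * c {1,3,5})‖ + ‖eps (3:Fin 6) ({3,4,5} : Finset (Fin 6)) * eps (2:Fin 6) ({2,4,5} : Finset (Fin 6)) * (starRingEnd ℂ) (c {2,4,5}) * c {3,4,5}‖ := norm_add_le _ _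
      _ ≤ (‖(eps (3:Fin 6) ({0,3,4} : Finset (Fin 6)) * eps (2:Fin 6) ({0,2,4} : Finset (Fin 6)) * (starRingEnd ℂ) (c {0,2,4}) * c {0,3,4}) + (eps (3:Fin 6) ({0,3,5} : Finset (Fin 6)) * eps (2:Fin 6) ({0,2,5} : Finset (Fin 6)) * (starRingEnd ℂ) (c {0,2,5}) * c {0,3,5}) + (eps (3:Fin 6) ({1,3,4} : Finset (Fin 6)) * eps (2:Fin 6) ({1,2,4} : Finset (Fin 6)) * (starRingEnd ℂ) (c {1,2,4}) * c {1,3,4})‖ + ‖eps (3:Fin 6) ({1,3,5} : Finset (Fin 6)) * eps (2:Fin 6) ({1,2,5} : Finset (Fin 6)) * (starRingEnd ℂ) (c {1,2,5}) * c {1,3,5}‖) + ‖eps (3:Fin 6) ({3,4,5} : Finset (Fin 6)) * eps (2:Fin 6) ({2,4,5} : Finset (Fin 6)) * (starRingEnd ℂ) (c {2,4,5}) * c {3,4,5}‖ := add_le_add_left (norm_add_le _ _) _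
      _ ≤ ((‖(eps (3:Fin 6) ({0,3,4} : Finset (Fin 6)) * eps (2:Fin 6) ({0,2,4} : Finset (Fin 6)) * (starRingEnd ℂ) (c {0,2,4}) * c {0,3,4}) + (eps (3:Fin 6) ({0,3,5} : Finset (Fin 6)) * eps (2:Fin 6) ({0,2,5} : Finset (Fin 6)) * (starRingEnd ℂ) (c {0,2,5}) * c {0,3,5})‖ + ‖eps (3:Fin 6) ({1,3,4} : Finset (Fin 6)) * eps (2:Fin 6) ({1,2,4} : Finset (Fin 6)) * (starRingEnd ℂ) (c {1,2,4}) * c {1,3,4}‖) + ‖eps (3:Fin 6) ({1,3,5} : Finset (Fin 6)) * eps (2:Fin 6) ({1,2,5} : Finset (Fin 6)) * (starRingEnd ℂ) (c {1,2,5}) * c {1,3,5}‖) + ‖eps (3:Fin 6) ({3,4,5} : Finset (Fin 6)) * eps (2:Fin 6) ({2,4,5} : Finset (Fin 6)) * (starRingEnd ℂ) (c {2,4,5}) * c {3,4,5}‖ := add_le_add_left (add_le_add_left (norm_add_le _ _) _) _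
      _ ≤ (((‖eps (3:Fin 6) ({0,3,4} : Finset (Fin 6)) * eps (2:Fin 6) ({0,2,4} : Finset (Fin 6)) * (starRingEnd ℂ) (c {0,2,4}) * c {0,3,4}‖ + ‖eps (3:Fin 6) ({0,3,5} : Finset (Fin 6)) * eps (2:Fin 6) ({0,2,5} : Finset (Fin 6)) * (starRingEnd ℂ) (c {0,2,5}) * c {0,3,5}‖) + ‖eps (3:Fin 6) ({1,3,4} : Finset (Fin 6)) * eps (2:Fin 6) ({1,2,4} : Finset (Fin 6)) * (starRingEnd ℂ) (c {1,2,4}) * c {1,3,4}‖) + ‖eps (3:Fin 6) ({1,3,5} : Finset (Fin 6)) * eps (2:Fin 6) ({1,2,5} : Finset (Fin 6)) * (starRingEnd ℂ) (c {1,2,5}) * c {1,3,5}‖) + ‖eps (3:Fin 6) ({3,4,5} : Finset (Fin 6)) * eps (2:Fin 6) ({2,4,5} : Finset (Fin 6)) * (starRingEnd ℂ) (c {2,4,5}) * c {3,4,5}‖ := add_le_add_left (add_le_add_left (add_le_add_left (norm_add_le _ _) _) _) _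
      _ = ‖c {0,2,4}‖ * ‖c {0,3,4}‖ + ‖c {0,2,5}‖ * ‖c {0,3,5}‖ + ‖c {1,2,4}‖ * ‖c {1,3,4}‖ + ‖c {1,2,5}‖ * ‖c {1,3,5}‖ + ‖c {2,4,5}‖ * ‖c {3,4,5}‖ := by rw [e2, e3, e4, e5, e6]
  have hX : ‖c {0,2,4}‖ ^ 2 + ‖c {0,2,5}‖ ^ 2 + ‖c {1,2,4}‖ ^ 2 + ‖c {1,2,5}‖ ^ 2 + ‖c {2,4,5}‖ ^ 2 ≤ ‖c {0,1,3}‖ ^ 2 - (‖c {2,4,5}‖ ^ 2 + ‖c {3,4,5}‖ ^ 2) := by linarith [sq_nonneg (‖c {0,4,5}‖), sq_nonneg (‖c {1,4,5}‖), sq_nonneg (‖c {2,3,4}‖), sq_nonneg (‖c {2,3,5}‖)]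
  have hY : ‖c {0,3,4}‖ ^ 2 + ‖c {0,3,5}‖ ^ 2 + ‖c {1,3,4}‖ ^ 2 + ‖c {1,3,5}‖ ^ 2 + ‖c {3,4,5}‖ ^ 2 ≤ ‖c {0,1,2}‖ ^ 2 - (‖c {2,4,5}‖ ^ 2 + ‖c {3,4,5}‖ ^ 2) := by linarith [sq_nonneg (‖c {0,4,5}‖), sq_nonneg (‖c {1,4,5}‖), sq_nonneg (‖c {2,3,4}‖), sq_nonneg (‖c {2,3,5}‖)]
  have hXpos : (0:ℝ) ≤ ‖c {0,2,4}‖ ^ 2 + ‖c {0,2,5}‖ ^ 2 + ‖c {1,2,4}‖ ^ 2 + ‖c {1,2,5}‖ ^ 2 + ‖c {2,4,5}‖ ^ 2 := by positivity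
  have hYpos : (0:ℝ) ≤ ‖c {0,3,4}‖ ^ 2 + ‖c {0,3,5}‖ ^ 2 + ‖c {1,3,4}‖ ^ 2 + ‖c {1,3,5}‖ ^ 2 + ‖c {3,4,5}‖ ^ 2 := by positivity
  have hid : (‖c {0,2,4}‖ ^ 2 + ‖c {0,2,5}‖ ^ 2 + ‖c {1,2,4}‖ ^ 2 + ‖c {1,2,5}‖ ^ 2 + ‖c {2,4,5}‖ ^ 2) * (‖c {0,3,4}‖ ^ 2 + ‖c {0,3,5}‖ ^ 2 + ‖c {1,3,4}‖ ^ 2 + ‖c {1,3,5}‖ ^ 2 + ‖c {3,4,5}‖ ^ 2) - (‖c {0,2,4}‖ * ‖c {0,3,4}‖ + ‖c {0,2,5}‖ * ‖c {0,3,5}‖ + ‖c {1,2,4}‖ * ‖c {1,3,4}‖ + ‖c {1,2,5}‖ * ‖c {1,3,5}‖ + ‖c {2,4,5}‖ * ‖c {3,4,5}‖) ^ 2 = ((‖c {0,2,4}‖) * (‖c {0,3,5}‖) - (‖c {0,2,5}‖) * (‖c {0,3,4}‖)) ^ 2 + ((‖c {0,2,4}‖) * (‖c {1,3,4}‖) -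 (‖c {1,2,4}‖) * (‖c {0,3,4}‖)) ^ 2 + ((‖c {0,2,4}‖) * (‖c {1,3,5}‖) - (‖c {1,2,5}‖) * (‖c {0,3,4}‖)) ^ 2 + ((‖c {0,2,4}‖) * (‖c {3,4,5}‖) - (‖c {2,4,5}‖) * (‖c {0,3,4}‖)) ^ 2 + ((‖c {0,2,5}‖) * (‖c {1,3,4}‖) - (‖c {1,2,4}‖) * (‖c {0,3,5}‖)) ^ 2 + ((‖c {0,2,5}‖) * (‖c {1,3,5}‖) - (‖c {1,2,5}‖) * (‖c {0,3,5}‖)) ^ 2 + ((‖c {0,2,5}‖) * (‖c {3,4,5}‖) - (‖c {2,4,5}‖) * (‖c {0,3,5}‖)) ^ 2 + ((‖c {1,2,4}‖) * (‖c {1,3,5}‖) - (‖c {1,2,5}‖) * (‖c {1,3,4}‖)) ^ 2 + ((‖c {1,2,4}‖) * (‖c {3,4,5}‖) - (‖c {2,4,5}‖) * (‖c {1,3,4}‖)) ^ 2 + ((‖c {1,2,5}‖) * (‖c {3,4,5}‖) - (‖c {2,4,5}‖) * (‖c {1,3,5}‖)) ^ 2 := by ring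
  have hR : (‖c {0,2,4}‖ * ‖c {0,3,4}‖ + ‖c {0,2,5}‖ * ‖c {0,3,5}‖ + ‖c {1,2,4}‖ * ‖c {1,3,4}‖ + ‖c {1,2,5}‖ * ‖c {1,3,5}‖ + ‖c {2,4,5}‖ * ‖c {3,4,5}‖) ^ 2 ≤ (‖c {0,2,4}‖ ^ 2 + ‖c {0,2,5}‖ ^ 2 + ‖c {1,2,4}‖ ^ 2 + ‖c {1,2,5}‖ ^ 2 + ‖c {2,4,5}‖ ^ 2) * (‖c {0,3,4}‖ ^ 2 + ‖c {0,3,5}‖ ^ 2 + ‖c {1,3,4}‖ ^ 2 + ‖c {1,3,5}‖ ^ 2 + ‖c {3,4,5}‖ ^ 2) := by linarith only [hid, sq_nonneg (‖c {0,2,4}‖ * ‖c {0,3,5}‖ - ‖c {0,2,5}‖ * ‖c {0,3,4}‖), sq_nonneg (‖c {0,2,4}‖ * ‖c {1,3,4}‖ - ‖c {1,2,4}‖ * ‖c {0,3,4}‖), sq_nonneg (‖c {0,2,4}‖ * ‖c {1,3,5}‖ - ‖c {1,2,5}‖ * ‖c {0,3,4}‖), sq_nonneg (‖c {0,2,4}‖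 * ‖c {3,4,5}‖ - ‖c {2,4,5}‖ * ‖c {0,3,4}‖), sq_nonneg (‖c {0,2,5}‖ * ‖c {1,3,4}‖ - ‖c {1,2,4}‖ * ‖c {0,3,5}‖), sq_nonneg (‖c {0,2,5}‖ * ‖c {1,3,5}‖ - ‖c {1,2,5}‖ * ‖c {0,3,5}‖), sq_nonneg (‖c {0,2,5}‖ * ‖c {3,4,5}‖ - ‖c {2,4,5}‖ * ‖c {0,3,5}‖), sq_nonneg (‖c {1,2,4}‖ * ‖c {1,3,5}‖ - ‖c {1,2,5}‖ * ‖c {1,3,4}‖), sq_nonneg (‖c {1,2,4}‖ * ‖c {3,4,5}‖ - ‖c {2,4,5}‖ * ‖c {1,3,4}‖), sq_nonneg (‖c {1,2,5}‖ * ‖c {3,4,5}‖ - ‖c {2,4,5}‖ * ‖c {1,3,5}‖)]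
  have hL : (‖c {0,1,2}‖ * ‖c {0,1,3}‖) ^ 2 ≤ (‖c {0,2,4}‖ * ‖c {0,3,4}‖ + ‖c {0,2,5}‖ * ‖c {0,3,5}‖ + ‖c {1,2,4}‖ * ‖c {1,3,4}‖ + ‖c {1,2,5}‖ * ‖c {1,3,5}‖ + ‖c {2,4,5}‖ * ‖c {3,4,5}‖) ^ 2 := by
    have h0 : 0 ≤ ‖c {0,1,2}‖ * ‖c {0,1,3}‖ := mul_nonneg (norm_nonneg _) (norm_nonneg _)
    exact pow_le_pow_left₀ h0 htri 2
  have hM : (‖c {0,2,4}‖ ^ 2 + ‖c {0,2,5}‖ ^ 2 + ‖c {1,2,4}‖ ^ 2 + ‖c {1,2,5}‖ ^ 2 + ‖c {2,4,5}‖ ^ 2) * (‖c {0,3,4}‖ ^ 2 + ‖c {0,3,5}‖ ^ 2 + ‖c {1,3,4}‖ ^ 2 + ‖c {1,3,5}‖ ^ 2 + ‖c {3,4,5}‖ ^ 2) ≤ (‖c {0,1,3}‖ ^ 2 - (‖c {2,4,5}‖ ^ 2 + ‖c {3,4,5}‖ ^ 2)) * (‖c {0,1,2}‖ ^ 2 -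 (‖c {2,4,5}‖ ^ 2 + ‖c {3,4,5}‖ ^ 2)) := by
    apply mul_le_mul hX hY hYpos (by linarith only [hX, hXpos])
  have hcomb : (‖c {0,1,2}‖ * ‖c {0,1,3}‖) ^ 2 ≤ (‖c {0,1,3}‖ ^ 2 - (‖c {2,4,5}‖ ^ 2 + ‖c {3,4,5}‖ ^ 2)) * (‖c {0,1,2}‖ ^ 2 - (‖c {2,4,5}‖ ^ 2 + ‖c {3,4,5}‖ ^ 2)) := le_trans hL (le_trans hR hM)
  have heP : ‖c {2,4,5}‖ ^ 2 + ‖c {3,4,5}‖ ^ 2 ≤ ‖c {0,1,2}‖ ^ 2 := by linarith only [hY, hYpos]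
  have heQ : ‖c {2,4,5}‖ ^ 2 + ‖c {3,4,5}‖ ^ 2 ≤ ‖c {0,1,3}‖ ^ 2 := by linarith only [hX, hXpos]
  have hee : (0:ℝ) ≤ ‖c {2,4,5}‖ ^ 2 + ‖c {3,4,5}‖ ^ 2 := by positivity
  have hprod1 : (‖c {2,4,5}‖ ^ 2 + ‖c {3,4,5}‖ ^ 2) * (‖c {2,4,5}‖ ^ 2 + ‖c {3,4,5}‖ ^ 2) ≤ (‖c {2,4,5}‖ ^ 2 + ‖c {3,4,5}‖ ^ 2) * (‖c {0,1,2}‖ ^ 2) := mul_le_mul_of_nonneg_left heP hee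
  have hprod2 : (‖c {2,4,5}‖ ^ 2 + ‖c {3,4,5}‖ ^ 2) * (‖c {2,4,5}‖ ^ 2 + ‖c {3,4,5}‖ ^ 2) ≤ (‖c {2,4,5}‖ ^ 2 + ‖c {3,4,5}‖ ^ 2) * (‖c {0,1,3}‖ ^ 2) := mul_le_mul_of_nonneg_left heQ hee
  have hsq : (‖c {2,4,5}‖ ^ 2 + ‖c {3,4,5}‖ ^ 2) ^ 2 ≤ 0 := by linarith only [hcomb, hprod1, hprod2]
  have hzero : (‖c {2,4,5}‖ ^ 2 + ‖c {3,4,5}‖ ^ 2) = 0 := (pow_eq_zero_iff two_ne_zero).mp (le_antisymm hsq (sq_nonneg _))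
  have k245 : ‖c {2,4,5}‖ ^ 2 = 0 := le_antisymm (by linarith only [hzero, sq_nonneg (‖c {3,4,5}‖)]) (sq_nonneg _)
  have k345 : ‖c {3,4,5}‖ ^ 2 = 0 := le_antisymm (by linarith only [hzero, sq_nonneg (‖c {2,4,5}‖)]) (sq_nonneg _)
  constructor
  · exact norm_eq_zero.mp ((pow_eq_zero_iff two_ne_zero).mp k245)
  · exact norm_eq_zero.mp ((pow_eq_zero_iff two_ne_zero).mp k345)
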